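/- arXiv:1712.07272 — 2 statements merged into one kernel-verified Lean document; each statement's English description precedes it below -/
import Mathlib

section
/- Let (Λ,S) be a measurable space, let A⊂ℝⁿ be bounded and open, let R>0, and let h:Λ×A→ℝ be a bounded S⊗B(A)-measurable function. Define H:Λ×M^R_A→ℝ by H(λ,μ):=∫_A h(λ,x) d|μ|(x). Then H is S⊗B(M^R_A)-measurable. -/
open MeasureTheory Filter Topology ENNReal Metric

noncomputable section
open Classical

/-! ### Basic geometric objects -/

/-- Euclidean space `ℝⁿ`. -/
abbrev Rn (n : ℕ) := EuclideanSpace ℝ (Fin n)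

/-- Euclidean (Frobenius) norm of a matrix `ξ ∈ ℝ^{m×n}`. -/
def matNorm {m n : ℕ} (ξ : Fin m → Fin n → ℝ) : ℝ := Real.sqrt (∑ i, ∑ j, (ξ i j)^2)

/-- Application of a matrix `ξ ∈ ℝ^{m×n}` to a vector. -/
def matApply {m n : ℕ} (ξ : Fin m → Fin n → ℝ) (w : Rn n) : Rn m := WithLp.toLp 2 (fun i => ∑ j, ξ i j * w j)

/-- The linear function `ℓ_ξ(x) := ξ x`. -/
def lin {n m : ℕ} (ξ : Fin m → Fin n → ℝ) : Rn n → Rn m := fun x => WithLp.toLp 2 (fun i => ∑ j, ξ i j * x j)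

/-- The embedding of `ℤⁿ` in `ℝⁿ`. -/
def zvec {n : ℕ} (z : Fin n → ℤ) : Rn n := WithLp.toLp 2 (fun i => (z i : ℝ))

/-- The open coordinate cube `Q_t(y)` of side `t` centred at `y`. -/
def Qcube {n : ℕ} (t : ℝ) (y : Rn n) : Set (Rn n) := {z | ∀ i, |z i - y i| < t/2}

/-- The piecewise constant jump datum `u_{x,ζ,ν}`. -/
def pcDatum {n m : ℕ} (x : Rn n) (ζ : Rn m) (ν : Rn n) : Rn n → Rn m :=
  fun y => if 0 ≤ (inner ℝ (y - x) ν : ℝ) then ζ else 0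

/-- A vector with rational coordinates. -/
def IsRatVec {n : ℕ} (x : Rn n) : Prop := ∀ i, ∃ q : ℚ, x i = (q : ℝ)

/-- The largest index `i` with `x i ≠ 0` (junk value `0` for `x = 0`). -/
def lastNZ {n : ℕ} [NeZero n] (x : Rn n) : Fin n :=
  if h : (Finset.univ.filter fun i => x i ≠ 0).Nonempty then
    (Finset.univ.filter fun i => x i ≠ 0).max' h
  else 0

/-- The hemisphere `Ŝ^{n-1}_+ = {x ∈ S^{n-1} : x_{i(x)} > 0}`. -/
def hemiP (n : ℕ) [NeZero n] : Set (Rn n) := {x | ‖x‖ = 1 ∧ 0 < x (lastNZ x)}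

/-- The hemisphere `Ŝ^{n-1}_-`. -/
def hemiM (n : ℕ) [NeZero n] : Set (Rn n) := {x | ‖x‖ = 1 ∧ x (lastNZ x) < 0}

/-- A fixed family of rotations `ν ↦ R_ν` with `R_ν e_n = ν`, continuous on the
hemispheres `Ŝ^{n-1}_±`, with `R_{-ν} Q(0) = R_ν Q(0)`, and mapping rational
vectors to rational vectors when `ν` is rational (cf. (k) in Section 2). -/
structure RotFamily (n : ℕ) [NeZero n] where
  R : Rn n → (Rn n ≃ₗᵢ[ℝ] Rn n)
  maps_en : ∀ ν : Rn n, ‖ν‖ = 1 →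
    R ν (EuclideanSpace.single (⟨n-1, Nat.sub_lt (NeZero.pos n) one_pos⟩ : Fin n) (1:ℝ)) = ν
  cube_symm : ∀ ν : Rn n, ‖ν‖ = 1 → (R (-ν)) '' (Qcube 1 0) = (R ν) '' (Qcube 1 0)
  contP : ∀ v : Rn n, ContinuousOn (fun ν => R ν v) (hemiP n)
  contM : ∀ v : Rn n, ContinuousOn (fun ν => R ν v) (hemiM n)
  rat : ∀ ν : Rn n, ‖ν‖ = 1 → IsRatVec ν → ∀ v, IsRatVec v → IsRatVec (R ν v)

/-- The oriented cube `Q^ν_t(y) := R_ν Q_t(0) + y`. -/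
def Qnu {n : ℕ} [NeZero n] (Rot : RotFamily n) (ν : Rn n) (t : ℝ) (y : Rn n) : Set (Rn n) :=
  (fun z => y + Rot.R ν z) '' Qcube t 0

/-- `u = w` a.e. in a neighbourhood of `∂A`. -/
def EqNearBdry {n m : ℕ} (u w : Rn n → Rn m) (A : Set (Rn n)) : Prop :=
  ∃ U : Set (Rn n), IsOpen U ∧ frontier A ⊆ U ∧ ∀ᵐ x, x ∈ U → u x = w x

/-! ### Sobolev functions and the volume functional -/

/-- `V` is a weak (distributional) derivative of `u` on `A`. -/
def HasWeakDerivOn {n m : ℕ} (u : Rn n → Rn m) (V : Rn n → Fin m → Fin n → ℝ)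
    (A : Set (Rn n)) : Prop :=
  (∀ i j, IntegrableOn (fun x => V x i j) A volume) ∧
  ∀ φ : Rn n → ℝ, ContDiff ℝ 1 φ → HasCompactSupport φ → tsupport φ ⊆ A →
    ∀ i j, ∫ x in A, u x i * fderiv ℝ φ x (EuclideanSpace.single j (1:ℝ)) =
      - ∫ x in A, V x i j * φ x

/-- `u|_A ∈ W^{1,p}(A,ℝ^m)`. -/
def MemW1p {n m : ℕ} (p : ℝ) (u : Rn n → Rn m) (A : Set (Rn n)) : Prop :=
  MemLp u (ENNReal.ofReal p) (volume.restrict A) ∧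
  ∃ V, HasWeakDerivOn u V A ∧
    MemLp (fun x => matNorm (V x)) (ENNReal.ofReal p) (volume.restrict A)

/-- A choice of weak derivative of `u` on `A` (junk value `0` if none exists). -/
def wDeriv {n m : ℕ} (u : Rn n → Rn m) (A : Set (Rn n)) : Rn n → Fin m → Fin n → ℝ :=
  if h : ∃ V, HasWeakDerivOn u V A then h.choose else fun _ _ _ => 0

/-- The volume functional `F(u,A)`, with value `∞` outside `W^{1,p}`. -/
def volF {n m : ℕ} (p : ℝ) (f : Rn n → (Fin m → Fin n → ℝ) → ℝ)
    (u : Rn n → Rn m) (A : Set (Rn n)) : ℝ≥0∞ :=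
  if MemW1p p u A then ∫⁻ x in A, ENNReal.ofReal (f x (wDeriv u A x)) else ⊤

/-- The Dirichlet minimum value `m^{1,p}_F(w,A)`. -/
def mF {n m : ℕ} (p : ℝ) (f : Rn n → (Fin m → Fin n → ℝ) → ℝ)
    (w : Rn n → Rn m) (A : Set (Rn n)) : ℝ≥0∞ :=
  ⨅ (u : Rn n → Rn m) (_ : MemW1p p u A ∧ EqNearBdry u w A), volF p f u A

/-! ### Jump sets, `SBV` functions and the surface functional -/

/-- `(a,b,ν)` is an approximate jump triple of `u` at `x`. -/
def ApproxJump {n m : ℕ} (u : Rn n → Rn m) (x : Rn n) (a b : Rn m) (ν : Rn n) : Prop :=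
  ‖ν‖ = 1 ∧ a ≠ b ∧
  Tendsto (fun ρ : ℝ =>
      (volume (ball x ρ))⁻¹ *
        ∫⁻ y in {y ∈ ball x ρ | 0 < (inner ℝ (y - x) ν : ℝ)}, ENNReal.ofReal ‖u y - a‖)
    (𝓝[>] (0:ℝ)) (𝓝 0) ∧
  Tendsto (fun ρ : ℝ =>
      (volume (ball x ρ))⁻¹ *
        ∫⁻ y in {y ∈ ball x ρ | (inner ℝ (y - x) ν : ℝ) < 0}, ENNReal.ofReal ‖u y - b‖)
    (𝓝[>] (0:ℝ)) (𝓝 0)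

/-- The (approximate) jump set `S_u`. -/
def jumpSet {n m : ℕ} (u : Rn n → Rn m) : Set (Rn n) := {x | ∃ a b ν, ApproxJump u x a b ν}

/-- A choice of jump triple `(u⁺, u⁻, ν_u)` at `x`. -/
def jumpTriple {n m : ℕ} (u : Rn n → Rn m) (x : Rn n) : Rn m × Rn m × Rn n :=
  if h : ∃ q : Rn m × Rn m × Rn n, ApproxJump u x q.1 q.2.1 q.2.2 then h.choose else (0, 0, 0)

/-- The jump `[u] := u⁺ - u⁻` of `u` at `x`. -/
def jump {n m : ℕ} (u : Rn n → Rn m) (x : Rn n) : Rn m :=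
  (jumpTriple u x).1 - (jumpTriple u x).2.1

/-- The approximate normal `ν_u` to `S_u` at `x`. -/
def jnormal {n m : ℕ} (u : Rn n → Rn m) (x : Rn n) : Rn n := (jumpTriple u x).2.2

/-- `u` is approximately differentiable at `x` with approximate differential `V`. -/
def ApproxDiffAt {n m : ℕ} (u : Rn n → Rn m) (x : Rn n) (V : Fin m → Fin n → ℝ) : Prop :=
  ∀ δ > (0:ℝ), Tendsto (fun ρ : ℝ =>
      volume {y ∈ ball x ρ | δ * ‖y - x‖ < ‖u y - u x - matApply V (y - x)‖} / volume (ball x ρ))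
    (𝓝[>] (0:ℝ)) (𝓝 0)

/-- The approximate gradient `∇u` (junk value `0` where it does not exist). -/
def aGrad {n m : ℕ} (u : Rn n → Rn m) (x : Rn n) : Fin m → Fin n → ℝ :=
  if h : ∃ V, ApproxDiffAt u x V then h.choose else fun _ _ => 0

/-- `u|_A ∈ SBV(A,ℝ^m)`: the distributional derivative of `u` on `A` is the sum of
the absolutely continuous part `∇u·𝓛ⁿ` and of the jump part `[u]⊗ν_u·𝓗^{n-1}⌞S_u`. -/
def MemSBV {n m : ℕ} (u : Rn n → Rn m) (A : Set (Rn n)) : Prop :=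
  IntegrableOn u A volume ∧
  (∀ i j, IntegrableOn (fun x => aGrad u x i j) A volume) ∧
  ∀ φ : Rn n → ℝ, ContDiff ℝ 1 φ → HasCompactSupport φ → tsupport φ ⊆ A →
    ∀ i j, ∫ x in A, u x i * fderiv ℝ φ x (EuclideanSpace.single j (1:ℝ)) =
      - ∫ x in A, aGrad u x i j * φ x
      - ∫ x in jumpSet u ∩ A, (jump u x i) * (jnormal u x j) * φ x ∂(μH[(n-1 : ℝ)])

/-- `u|_A ∈ SBV_pc(A,ℝ^m)`: `u ∈ SBV`, `∇u = 0` a.e., and `𝓗^{n-1}(S_u) < ∞`. -/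
def MemSBVpc {n m : ℕ} (u : Rn n → Rn m) (A : Set (Rn n)) : Prop :=
  MemSBV u A ∧ (∀ᵐ x ∂volume.restrict A, aGrad u x = fun _ _ => 0) ∧
    μH[(n-1 : ℝ)] (jumpSet u ∩ A) < ⊤

/-- `u|_A ∈ SBV^p(A,ℝ^m)`. -/
def MemSBVp {n m : ℕ} (p : ℝ) (u : Rn n → Rn m) (A : Set (Rn n)) : Prop :=
  MemSBV u A ∧ MemLp (fun x => matNorm (aGrad u x)) (ENNReal.ofReal p) (volume.restrict A) ∧
    μH[(n-1 : ℝ)] (jumpSet u ∩ A) < ⊤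

/-- `u|_A ∈ GSBV^p(A,ℝ^m)`. -/
def MemGSBVp {n m : ℕ} (p : ℝ) (u : Rn n → Rn m) (A : Set (Rn n)) : Prop :=
  Measurable u ∧
  ∀ ψ : Rn m → Rn m, ContDiff ℝ 1 ψ → HasCompactSupport ψ → MemSBVp p (ψ ∘ u) A

/-- The surface functional `G(u,A)` (on `SBV`-type functions; `∞` on the rest). -/
def surfE {n m : ℕ} (g : Rn n → Rn m → Rn n → ℝ) (u : Rn n → Rn m) (A : Set (Rn n)) : ℝ≥0∞ :=
  ∫⁻ x in jumpSet u ∩ A, ENNReal.ofReal (g x (jump u x) (jnormal u x)) ∂(μH[(n-1 : ℝ)])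

/-- The Dirichlet minimum value `m^{pc}_G(w,A)`. -/
def mG {n m : ℕ} (g : Rn n → Rn m → Rn n → ℝ) (w : Rn n → Rn m) (A : Set (Rn n)) : ℝ≥0∞ :=
  ⨅ (u : Rn n → Rn m) (_ : MemSBVpc u A ∧ EqNearBdry u w A), surfE g u A

/-! ### Integrand classes and stationary random integrands -/

/-- A nondecreasing continuous modulus of continuity vanishing at `0`. -/
def IsModulus (σ : ℝ → ℝ) : Prop := Continuous σ ∧ Monotone σ ∧ σ 0 = 0 ∧ ∀ t, 0 ≤ σ t

/-- The class `𝓕 = 𝓕(p,c₁,c₂,σ₁)` of volume integrands. -/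
def IsVolumeIntegrand {n m : ℕ} (p c₁ c₂ : ℝ) (σ₁ : ℝ → ℝ)
    (f : Rn n → (Fin m → Fin n → ℝ) → ℝ) : Prop :=
  Measurable (fun q : Rn n × (Fin m → Fin n → ℝ) => f q.1 q.2) ∧
  (∀ x ξ, 0 ≤ f x ξ) ∧
  (∀ x ξ₁ ξ₂, |f x ξ₁ - f x ξ₂| ≤ σ₁ (matNorm (ξ₁ - ξ₂)) * (1 + f x ξ₁ + f x ξ₂)) ∧
  (∀ x ξ, c₁ * matNorm ξ ^ p ≤ f x ξ) ∧
  (∀ x ξ, f x ξ ≤ c₂ * (1 + matNorm ξ ^ p))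

/-- The class `𝓖 = 𝓖(c₃,c₄,c₅,σ₂)` of surface integrands. -/
def IsSurfaceIntegrand {n m : ℕ} (c₃ c₄ c₅ : ℝ) (σ₂ : ℝ → ℝ)
    (g : Rn n → Rn m → Rn n → ℝ) : Prop :=
  Measurable (fun q : Rn n × Rn m × Rn n => g q.1 q.2.1 q.2.2) ∧
  (∀ x ζ ν, 0 ≤ g x ζ ν) ∧
  (∀ x ν, ‖ν‖ = 1 → ∀ ζ₁ ζ₂ : Rn m, ζ₁ ≠ 0 → ζ₂ ≠ 0 →
      |g x ζ₂ ν - g x ζ₁ ν| ≤ σ₂ ‖ζ₁ - ζ₂‖ * (g x ζ₁ ν + g x ζ₂ ν)) ∧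
  (∀ x ν, ‖ν‖ = 1 → ∀ ζ₁ ζ₂ : Rn m, ζ₁ ≠ 0 → ζ₂ ≠ 0 → ‖ζ₁‖ ≤ ‖ζ₂‖ →
      g x ζ₁ ν ≤ c₃ * g x ζ₂ ν) ∧
  (∀ x ν, ‖ν‖ = 1 → ∀ ζ₁ ζ₂ : Rn m, ζ₁ ≠ 0 → ζ₂ ≠ 0 → c₃ * ‖ζ₁‖ ≤ ‖ζ₂‖ →
      g x ζ₁ ν ≤ g x ζ₂ ν) ∧
  (∀ x ζ ν, ζ ≠ 0 → ‖ν‖ = 1 → c₄ ≤ g x ζ ν) ∧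
  (∀ x ζ ν, ζ ≠ 0 → ‖ν‖ = 1 → g x ζ ν ≤ c₅ * (1 + ‖ζ‖)) ∧
  (∀ x ζ ν, ζ ≠ 0 → ‖ν‖ = 1 → g x ζ ν = g x (-ζ) (-ν))

/-- A group `(τ_z)_{z∈ℤᵏ}` of `P`-preserving transformations on `(Ω,𝒯,P)`. -/
structure PPGroup (Ω : Type*) [MeasurableSpace Ω] (P : Measure Ω) (k : ℕ) where
  τ : (Fin k → ℤ) → Ω → Ω
  measurable : ∀ z, Measurable (τ z)
  bijective : ∀ z, Function.Bijective (τ z)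
  preserving : ∀ z s, MeasurableSet s → P (τ z '' s) = P s
  map_zero : τ 0 = id
  map_add : ∀ z z', τ (z + z') = τ z ∘ τ z'

/-- Ergodicity of a group of `P`-preserving transformations. -/
def PPGroup.IsErgodic {Ω : Type*} [MeasurableSpace Ω] {P : Measure Ω} {k : ℕ}
    (T : PPGroup Ω P k) : Prop :=
  ∀ s, MeasurableSet s → (∀ z, T.τ z '' s = s) → P s = 0 ∨ P s = 1

/-- A stationary random volume integrand. -/
def IsStatRandomVolumeIntegrand {Ω : Type*} [MeasurableSpace Ω] {P : Measure Ω}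
    {n m : ℕ} (p c₁ c₂ : ℝ) (σ₁ : ℝ → ℝ) (T : PPGroup Ω P n)
    (f : Ω → Rn n → (Fin m → Fin n → ℝ) → ℝ) : Prop :=
  Measurable (fun q : Ω × Rn n × (Fin m → Fin n → ℝ) => f q.1 q.2.1 q.2.2) ∧
  (∀ ω, IsVolumeIntegrand p c₁ c₂ σ₁ (f ω)) ∧
  (∀ ω x z ξ, f ω (x + zvec z) ξ = f (T.τ z ω) x ξ)

/-- A stationary random surface integrand. -/
def IsStatRandomSurfaceIntegrand {Ω : Type*} [MeasurableSpace Ω] {P : Measure Ω}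
    {n m : ℕ} (c₃ c₄ c₅ : ℝ) (σ₂ : ℝ → ℝ) (T : PPGroup Ω P n)
    (g : Ω → Rn n → Rn m → Rn n → ℝ) : Prop :=
  Measurable (fun q : Ω × Rn n × Rn m × Rn n => g q.1 q.2.1 q.2.2.1 q.2.2.2) ∧
  (∀ ω, IsSurfaceIntegrand c₃ c₄ c₅ σ₂ (g ω)) ∧
  (∀ ω x z ζ ν, g ω (x + zvec z) ζ ν = g (T.τ z ω) x ζ ν)

/-! ### Bounded `ℝ^{m×n}`-valued Radon measures and the weak* topology -/

/-- `ℝ^{m×n}`-valued measures on `ℝⁿ`. -/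
abbrev VMat (n m : ℕ) := VectorMeasure (Rn n) (Fin m → Fin n → ℝ)

/-- The `(i,j)` component of a matrix-valued measure, as a signed measure. -/
def vComp {n m : ℕ} (μ : VMat n m) (i : Fin m) (j : Fin n) : SignedMeasure (Rn n) :=
  μ.mapRange ((Pi.evalAddMonoidHom (fun _ : Fin n => ℝ) j).comp
      (Pi.evalAddMonoidHom (fun _ : Fin m => Fin n → ℝ) i))
    ((continuous_apply j).comp (continuous_apply i))

/-- A dominating positive measure for `μ`. -/
def vDom {n m : ℕ} (μ : VMat n m) : Measure (Rn n) :=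
  ∑ i, ∑ j, (vComp μ i j).totalVariation

/-- The total variation measure `|μ|` of a matrix-valued measure, with respect to the
Euclidean norm on `ℝ^{m×n}`: it is given by `‖dμ/d|μ|'‖·|μ|'` where `|μ|'` is any
dominating measure. -/
def evar {n m : ℕ} (μ : VMat n m) : Measure (Rn n) :=
  (vDom μ).withDensity fun x =>
    ENNReal.ofReal (Real.sqrt (∑ i, ∑ j, ((vComp μ i j).rnDeriv (vDom μ) x)^2))

/-- The set `M^R_A` of measures concentrated on `A` with total variation at most `R`. -/
def MRAset {n m : ℕ} (A : Set (Rn n)) (R : ℝ) : Set (VMat n m) :=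
  {μ | evar μ Set.univ ≤ ENNReal.ofReal R ∧
    ∀ s : Set (Rn n), MeasurableSet s → s ∩ A = ∅ → μ s = 0}

/-- The space `M^R_A`. -/
def MR (n m : ℕ) (A : Set (Rn n)) (R : ℝ) : Type _ := {μ : VMat n m // μ ∈ MRAset A R}

/-- Integration of a (bounded continuous) function against a signed measure. -/
def sInt {n : ℕ} (σ : SignedMeasure (Rn n)) (φ : Rn n → ℝ) : ℝ :=
  ∫ x, φ x ∂σ.toJordanDecomposition.posPart - ∫ x, φ x ∂σ.toJordanDecomposition.negPart

/-- Test functions for the weak* topology on measures on `A`. -/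
def TestFun {n : ℕ} (A : Set (Rn n)) : Type _ :=
  {φ : Rn n → ℝ // Continuous φ ∧ HasCompactSupport φ ∧ tsupport φ ⊆ A}

/-- The weak* topology on `M^R_A` (induced by the duality with `C₀(A;ℝ^{m×n})`,
equivalently on bounded sets by the duality with compactly supported test functions). -/
instance MR.topologicalSpace (n m : ℕ) (A : Set (Rn n)) (R : ℝ) :
    TopologicalSpace (MR n m A R) :=
  TopologicalSpace.induced
    (fun μ => fun q : Fin m × Fin n × TestFun A => sInt (vComp μ.1 q.1 q.2.1) q.2.2.1)
    inferInstance

/-- The Borel σ-algebra `𝓑(M^R_A)` of the weak* topology. -/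
instance MR.measurableSpace (n m : ℕ) (A : Set (Rn n)) (R : ℝ) :
    MeasurableSpace (MR n m A R) := borel _


section LemmaA2Aux
open ProbabilityTheory

namespace A2
variable {n m : ℕ}

/-- The density appearing in `evar`. -/
def fden (μ : VMat n m) (x : Rn n) : ℝ :=
  Real.sqrt (∑ i, ∑ j, ((vComp μ i j).rnDeriv (vDom μ) x)^2)

lemma evar_eq (μ : VMat n m) :
    evar μ = (vDom μ).withDensity fun x => ENNReal.ofReal (fden μ x) := rfl

lemma measurable_fden (μ : VMat n m) : Measurable (fden μ) := by
  apply Measurable.sqrt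
  exact Finset.measurable_sum _ fun i _ => Finset.measurable_sum _ fun j _ =>
    ((SignedMeasure.measurable_rnDeriv _ _).pow_const 2)

instance (σ : SignedMeasure (Rn n)) : IsFiniteMeasure σ.totalVariation := by
  rw [SignedMeasure.totalVariation]; infer_instance

instance (μ : VMat n m) : IsFiniteMeasure (vDom μ) := by
  constructor
  rw [vDom, Measure.finset_sum_apply]
  refine ENNReal.sum_lt_top.2 fun i _ => ?_
  rw [Measure.finset_sum_apply]
  exact ENNReal.sum_lt_top.2 fun j _ => measure_lt_top _ _

lemma totalVariation_vComp_le (μ : VMat n m) (i : Fin m) (j : Fin n) :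
    (vComp μ i j).totalVariation ≤ vDom μ := by
  refine Measure.le_iff'.2 fun s => ?_
  rw [vDom, Measure.finset_sum_apply]
  calc (vComp μ i j).totalVariation s
      ≤ ∑ j', (vComp μ i j').totalVariation s := by
        exact Finset.single_le_sum (f := fun j' => (vComp μ i j').totalVariation s)
          (fun _ _ => zero_le) (Finset.mem_univ j)
    _ = (∑ j', (vComp μ i j').totalVariation) s := by rw [Measure.finset_sum_apply]
    _ ≤ ∑ i', (∑ j', (vComp μ i' j').totalVariation) s :=
        Finset.single_le_sum (f := fun i' => (∑ j', (vComp μ i' j').totalVariation) s)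
          (fun _ _ => zero_le) (Finset.mem_univ i)

lemma posPart_ac (μ : VMat n m) (i : Fin m) (j : Fin n) :
    (vComp μ i j).toJordanDecomposition.posPart ≪ vDom μ ∧
    (vComp μ i j).toJordanDecomposition.negPart ≪ vDom μ := by
  rw [← SignedMeasure.totalVariation_absolutelyContinuous_iff]
  exact (totalVariation_vComp_le μ i j).absolutelyContinuous

/-- Cauchy-Schwarz for double sums. -/
lemma double_cs (a b : Fin m → Fin n → ℝ) :
    ∑ i, ∑ j, a i j * b i j ≤
      Real.sqrt (∑ i, ∑ j, (a i j)^2) * Real.sqrt (∑ i, ∑ j, (b i j)^2) := by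
  have e1 : ∀ c : Fin m → Fin n → ℝ, ∑ i, ∑ j, c i j
      = ∑ p : Fin m × Fin n, c p.1 p.2 := by
    intro c; rw [← Finset.sum_product']; rfl
  rw [e1, e1 (fun i j => (a i j)^2), e1 (fun i j => (b i j)^2)]
  have h := Finset.sum_mul_sq_le_sq_mul_sq Finset.univ (fun p : Fin m × Fin n => a p.1 p.2)
    (fun p : Fin m × Fin n => b p.1 p.2)
  calc ∑ p : Fin m × Fin n, a p.1 p.2 * b p.1 p.2
      ≤ |∑ p : Fin m × Fin n, a p.1 p.2 * b p.1 p.2| := le_abs_self _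
    _ = Real.sqrt ((∑ p : Fin m × Fin n, a p.1 p.2 * b p.1 p.2)^2) :=
        (Real.sqrt_sq_eq_abs _).symm
    _ ≤ Real.sqrt ((∑ p : Fin m × Fin n, (a p.1 p.2)^2) * ∑ p : Fin m × Fin n, (b p.1 p.2)^2) :=
        Real.sqrt_le_sqrt h
    _ = _ := Real.sqrt_mul (Finset.sum_nonneg fun _ _ => sq_nonneg _) _

lemma fden_le_sum_abs (μ : VMat n m) (x : Rn n) :
    fden μ x ≤ ∑ i, ∑ j, |(vComp μ i j).rnDeriv (vDom μ) x| := by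
  rw [fden]
  have e1 : ∀ c : Fin m → Fin n → ℝ, ∑ i, ∑ j, c i j
      = ∑ p : Fin m × Fin n, c p.1 p.2 := by
    intro c; rw [← Finset.sum_product']; rfl
  rw [e1, e1 (fun i j => |(vComp μ i j).rnDeriv (vDom μ) x|)]
  have h : ∑ p : Fin m × Fin n, ((vComp μ p.1 p.2).rnDeriv (vDom μ) x)^2
      ≤ (∑ p : Fin m × Fin n, |(vComp μ p.1 p.2).rnDeriv (vDom μ) x|)^2 := by
    refine le_trans (le_of_eq ?_) (Finset.sum_sq_le_sq_sum_of_nonneg fun _ _ => abs_nonneg _)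
    simp [sq_abs]
  refine le_trans (Real.sqrt_le_sqrt h) (le_of_eq ?_)
  exact Real.sqrt_sq (Finset.sum_nonneg fun _ _ => abs_nonneg _)

instance (μ : VMat n m) : IsFiniteMeasure (evar μ) := by
  constructor
  rw [evar_eq, withDensity_apply _ MeasurableSet.univ, Measure.restrict_univ]
  calc ∫⁻ x, ENNReal.ofReal (fden μ x) ∂(vDom μ)
      ≤ ∫⁻ x, ∑ i, ∑ j, ENNReal.ofReal |(vComp μ i j).rnDeriv (vDom μ) x| ∂(vDom μ) := by
        refine lintegral_mono fun x => ?_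
        refine le_trans (ENNReal.ofReal_le_ofReal (fden_le_sum_abs μ x)) ?_
        rw [ENNReal.ofReal_sum_of_nonneg (fun _ _ => Finset.sum_nonneg fun _ _ => abs_nonneg _)]
        exact Finset.sum_le_sum fun i _ => le_of_eq
          (ENNReal.ofReal_sum_of_nonneg fun _ _ => abs_nonneg _)
    _ = ∑ i, ∑ j, ∫⁻ x, ENNReal.ofReal |(vComp μ i j).rnDeriv (vDom μ) x| ∂(vDom μ) := by
        rw [lintegral_finset_sum]
        · exact Finset.sum_congr rfl fun i _ => lintegral_finset_sum _ fun j _ =>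
            ((SignedMeasure.measurable_rnDeriv _ _).abs.ennreal_ofReal)
        · exact fun i _ => Finset.measurable_sum _ fun j _ =>
            ((SignedMeasure.measurable_rnDeriv _ _).abs.ennreal_ofReal)
    _ < ⊤ := by
        refine ENNReal.sum_lt_top.2 fun i _ => ENNReal.sum_lt_top.2 fun j _ => ?_
        have h := (SignedMeasure.integrable_rnDeriv (vComp μ i j) (vDom μ)).2
        rw [HasFiniteIntegral] at h
        refine lt_of_le_of_lt (le_of_eq ?_) h
        congr 1; ext x
        rw [← ofReal_norm_eq_enorm, Real.norm_eq_abs]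

lemma sInt_eq_integral (μ : VMat n m) (i : Fin m) (j : Fin n) (φ : Rn n → ℝ)
    (hφi : Integrable φ (vDom μ)) (hφm : Measurable φ) (C : ℝ) (hC : ∀ x, |φ x| ≤ C) :
    sInt (vComp μ i j) φ = ∫ x, φ x * (vComp μ i j).rnDeriv (vDom μ) x ∂(vDom μ) := by
  have hpos := (posPart_ac μ i j).1
  have hneg := (posPart_ac μ i j).2
  have h1 := integral_rnDeriv_smul (f := φ) hpos
  have h2 := integral_rnDeriv_smul (f := φ) hneg
  have key : ∀ P : Measure (Rn n), IsFiniteMeasure P → P ≪ vDom μ →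
      Integrable (fun x => (P.rnDeriv (vDom μ) x).toReal • φ x) (vDom μ) := by
    intro P hP hac
    have h := (Measure.integrable_toReal_rnDeriv (μ := P) (ν := vDom μ)).bdd_mul (c := C)
      hφm.aestronglyMeasurable (Filter.Eventually.of_forall fun x => by
        rw [Real.norm_eq_abs]; exact hC x)
    refine h.congr (Filter.Eventually.of_forall fun x => ?_)
    simp only [smul_eq_mul]; ring
  rw [sInt, ← h1, ← h2, ← integral_sub]
  · congr 1; ext x
    rw [SignedMeasure.rnDeriv, smul_eq_mul, smul_eq_mul]; ring
  · exact key _ inferInstance hpos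
  · exact key _ inferInstance hneg

lemma totalVariation_null {A : Set (Rn n)} (μ : VMat n m)
    (hμ : ∀ s, MeasurableSet s → s ∩ A = ∅ → μ s = 0) (i : Fin m) (j : Fin n)
    {t : Set (Rn n)} (ht : MeasurableSet t) (htA : t ∩ A = ∅) :
    (vComp μ i j).totalVariation t = 0 := by
  obtain ⟨w, hw1, hw2, hw3, hp, hn⟩ := (vComp μ i j).toJordanDecomposition_spec
  have key : ∀ u : Set (Rn n), MeasurableSet u → u ⊆ t → vComp μ i j u = 0 := by
    intro u hu hut
    have : μ u = 0 := hμ u hu (Set.eq_empty_of_subset_empty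
      (htA ▸ Set.inter_subset_inter_left A hut))
    show (μ u) i j = 0
    rw [this]
    rfl
  rw [SignedMeasure.totalVariation, Measure.add_apply, hp, hn,
    SignedMeasure.toMeasureOfZeroLE_apply _ hw2 hw1 ht,
    SignedMeasure.toMeasureOfLEZero_apply _ hw3 hw1.compl ht]
  have e1 := key (w ∩ t) (hw1.inter ht) Set.inter_subset_right
  have e2 := key (wᶜ ∩ t) (hw1.compl.inter ht) Set.inter_subset_right
  refine add_eq_zero.2 ⟨?_, ?_⟩
  · exact ENNReal.coe_eq_zero.2 (by apply NNReal.eq; simp [e1])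
  · exact ENNReal.coe_eq_zero.2 (by apply NNReal.eq; simp [e2])

lemma evar_null {A : Set (Rn n)} (μ : VMat n m)
    (hμ : ∀ s, MeasurableSet s → s ∩ A = ∅ → μ s = 0)
    {t : Set (Rn n)} (ht : MeasurableSet t) (htA : t ∩ A = ∅) : evar μ t = 0 := by
  have hv : vDom μ t = 0 := by
    rw [vDom, Measure.finset_sum_apply]
    refine Finset.sum_eq_zero fun i _ => ?_
    rw [Measure.finset_sum_apply]
    exact Finset.sum_eq_zero fun j _ => totalVariation_null μ hμ i j ht htA
  rw [evar_eq, withDensity_apply _ ht]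
  exact setLIntegral_measure_zero _ _ hv

lemma fden_nonneg (μ : VMat n m) (x : Rn n) : 0 ≤ fden μ x := Real.sqrt_nonneg _

lemma integrable_abs_rnDeriv (μ : VMat n m) (i : Fin m) (j : Fin n) :
    Integrable (fun x => |(vComp μ i j).rnDeriv (vDom μ) x|) (vDom μ) :=
  (SignedMeasure.integrable_rnDeriv _ _).abs

lemma integrable_fden (μ : VMat n m) : Integrable (fden μ) (vDom μ) := by
  refine Integrable.mono' (g := fun x => ∑ i, ∑ j, |(vComp μ i j).rnDeriv (vDom μ) x|)
    (integrable_finset_sum _ fun i _ => integrable_finset_sum _ fun j _ =>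
      integrable_abs_rnDeriv μ i j)
    (measurable_fden μ).aestronglyMeasurable
    (Filter.Eventually.of_forall fun x => ?_)
  rw [Real.norm_eq_abs, abs_of_nonneg (fden_nonneg μ x)]
  exact fden_le_sum_abs μ x

/-- Admissible test vector fields supported in `U`. -/
def AdmS (m n : ℕ) (U : Set (Rn n)) : Set (Fin m → Fin n → Rn n → ℝ) :=
  {ψ | (∀ i j, Continuous (ψ i j)) ∧ (∀ i j, HasCompactSupport (ψ i j)) ∧
       (∀ i j, tsupport (ψ i j) ⊆ U) ∧ ∀ x, ∑ i, ∑ j, (ψ i j x)^2 ≤ 1}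

lemma abs_le_one_of_sum_sq {a : Fin m → Fin n → ℝ} (h : ∑ i, ∑ j, (a i j)^2 ≤ 1)
    (i : Fin m) (j : Fin n) : |a i j| ≤ 1 := by
  have h1 : (a i j)^2 ≤ 1 := by
    refine le_trans ?_ h
    calc (a i j)^2 ≤ ∑ j', (a i j')^2 :=
          Finset.single_le_sum (f := fun j' => (a i j')^2) (fun _ _ => sq_nonneg _)
            (Finset.mem_univ j)
      _ ≤ ∑ i', ∑ j', (a i' j')^2 :=
          Finset.single_le_sum (f := fun i' => ∑ j', (a i' j')^2)
            (fun _ _ => Finset.sum_nonneg fun _ _ => sq_nonneg _) (Finset.mem_univ i)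
  nlinarith [abs_nonneg (a i j), sq_abs (a i j)]

lemma AdmS_bound {U : Set (Rn n)} {ψ} (hψ : ψ ∈ AdmS m n U) (i : Fin m) (j : Fin n)
    (x : Rn n) : |ψ i j x| ≤ 1 :=
  abs_le_one_of_sum_sq (a := fun i j => ψ i j x) (hψ.2.2.2 x) i j

lemma F_le_evar (μ : VMat n m) {U : Set (Rn n)} (hU : MeasurableSet U)
    {ψ} (hψ : ψ ∈ AdmS m n U) :
    ENNReal.ofReal (∑ i, ∑ j, sInt (vComp μ i j) (ψ i j)) ≤ evar μ U := by
  set ν := vDom μ with hν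
  set f := fun (i : Fin m) (j : Fin n) x => (vComp μ i j).rnDeriv ν x with hf
  have hint : ∀ i j, Integrable (ψ i j) ν :=
    fun i j => (hψ.1 i j).integrable_of_hasCompactSupport (hψ.2.1 i j)
  have hprod : ∀ (i : Fin m) (j : Fin n),
      Integrable (fun x => ψ i j x * f i j x) ν := fun i j =>
    (SignedMeasure.integrable_rnDeriv _ _).bdd_mul (c := 1)
      (hψ.1 i j).aestronglyMeasurable
      (Filter.Eventually.of_forall fun x => by
        rw [Real.norm_eq_abs]; exact AdmS_bound hψ i j x)
  have step1 : ∑ i, ∑ j, sInt (vComp μ i j) (ψ i j)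
      = ∫ x, ∑ i, ∑ j, ψ i j x * f i j x ∂ν := by
    rw [integral_finset_sum _ fun i _ => integrable_finset_sum _ fun j _ => hprod i j]
    refine Finset.sum_congr rfl fun i _ => ?_
    rw [integral_finset_sum _ fun j _ => hprod i j]
    exact Finset.sum_congr rfl fun j _ =>
      sInt_eq_integral μ i j (ψ i j) (hint i j) (hψ.1 i j).measurable 1
        (AdmS_bound hψ i j)
  have step2 : ∫ x, ∑ i, ∑ j, ψ i j x * f i j x ∂ν
      ≤ ∫ x, U.indicator (fden μ) x ∂ν := by
    refine integral_mono (integrable_finset_sum _ fun i _ =>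
      integrable_finset_sum _ fun j _ => hprod i j)
      ((integrable_fden μ).indicator hU) fun x => ?_
    by_cases hx : x ∈ U
    · rw [Set.indicator_of_mem hx]
      calc ∑ i, ∑ j, ψ i j x * f i j x
          ≤ Real.sqrt (∑ i, ∑ j, (ψ i j x)^2) * Real.sqrt (∑ i, ∑ j, (f i j x)^2) :=
            double_cs _ _
        _ ≤ 1 * fden μ x := by
            refine mul_le_mul_of_nonneg_right ?_ (Real.sqrt_nonneg _)
            exact Real.sqrt_le_one.2 (hψ.2.2.2 x)
        _ = fden μ x := one_mul _
    · rw [Set.indicator_of_notMem hx]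
      have : ∀ i j, ψ i j x = 0 := fun i j =>
        image_eq_zero_of_notMem_tsupport fun hmem => hx (hψ.2.2.1 i j hmem)
      simp [this]
  have step3 : ∫ x, U.indicator (fden μ) x ∂ν = ∫ x in U, fden μ x ∂ν :=
    integral_indicator hU
  calc ENNReal.ofReal (∑ i, ∑ j, sInt (vComp μ i j) (ψ i j))
      ≤ ENNReal.ofReal (∫ x in U, fden μ x ∂ν) := by
        refine ENNReal.ofReal_le_ofReal ?_
        rw [step1, ← step3]; exact step2
    _ = ∫⁻ x in U, ENNReal.ofReal (fden μ x) ∂ν :=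
        ofReal_integral_eq_lintegral_ofReal ((integrable_fden μ).restrict)
          (Filter.Eventually.of_forall fun x => Real.sqrt_nonneg _)
    _ = evar μ U := (withDensity_apply _ hU).symm

section MatNorm

/-- Flattened Euclidean vector of a matrix. -/
def mvec (a : Fin m → Fin n → ℝ) : EuclideanSpace ℝ (Fin m × Fin n) :=
  WithLp.toLp 2 (fun p : Fin m × Fin n => a p.1 p.2)

lemma mvec_norm (a : Fin m → Fin n → ℝ) :
    ‖mvec a‖ = Real.sqrt (∑ i, ∑ j, (a i j)^2) := by
  rw [EuclideanSpace.norm_eq]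
  congr 1
  rw [← Finset.sum_product']
  exact Finset.sum_congr rfl fun p _ => by rw [Real.norm_eq_abs, sq_abs]; rfl

lemma mvec_sub (a b : Fin m → Fin n → ℝ) :
    mvec (fun i j => a i j - b i j) = mvec a - mvec b := rfl

lemma S_sub_le (a b : Fin m → Fin n → ℝ) :
    Real.sqrt (∑ i, ∑ j, (a i j - b i j)^2)
      ≤ Real.sqrt (∑ i, ∑ j, (a i j)^2) + Real.sqrt (∑ i, ∑ j, (b i j)^2) := by
  rw [← mvec_norm, ← mvec_norm, ← mvec_norm, mvec_sub]
  exact norm_sub_le _ _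

lemma trunc_vec {E : Type*} [NormedAddCommGroup E] [NormedSpace ℝ E] (a b : E)
    (ha : ‖a‖ ≤ 1) : ‖a - (max 1 ‖b‖)⁻¹ • b‖ ≤ 2 * ‖a - b‖ := by
  by_cases hb : ‖b‖ ≤ 1
  · rw [max_eq_left hb, inv_one, one_smul]; linarith [norm_nonneg (a - b)]
  · push_neg at hb
    rw [max_eq_right hb.le]
    have hbpos : (0:ℝ) < ‖b‖ := lt_trans one_pos hb
    calc ‖a - ‖b‖⁻¹ • b‖ ≤ ‖a - b‖ + ‖b - ‖b‖⁻¹ • b‖ := by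
          have : a - ‖b‖⁻¹ • b = (a - b) + (b - ‖b‖⁻¹ • b) := by abel
          rw [this]; exact norm_add_le _ _
      _ = ‖a - b‖ + (‖b‖ - 1) := by
          have h1 : b - ‖b‖⁻¹ • b = (1 - ‖b‖⁻¹) • b := by
            rw [sub_smul, one_smul]
          rw [h1, norm_smul, Real.norm_eq_abs, abs_of_nonneg, sub_mul, one_mul,
            inv_mul_cancel₀ hbpos.ne']
          rw [sub_nonneg]
          exact inv_le_one_of_one_le₀ hb.le
      _ ≤ ‖a - b‖ + ‖a - b‖ := by
          have h2 : ‖b‖ - ‖a‖ ≤ ‖a - b‖ := by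
            rw [norm_sub_rev]; exact (norm_sub_norm_le b a)
          linarith
      _ = 2 * ‖a - b‖ := by ring

lemma pointwise_trunc (a b : Fin m → Fin n → ℝ) (χv : ℝ) (hχ0 : 0 ≤ χv) (hχ1 : χv ≤ 1)
    (ha : ∑ i, ∑ j, (a i j)^2 ≤ 1) :
    Real.sqrt (∑ i, ∑ j,
        (a i j - χv * ((max 1 (Real.sqrt (∑ i', ∑ j', (b i' j')^2)))⁻¹ * b i j))^2)
      ≤ 2 * Real.sqrt (∑ i, ∑ j, (a i j - b i j)^2) + (1 - χv) := by
  set c := max 1 (Real.sqrt (∑ i', ∑ j', (b i' j')^2)) with hc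
  have hav : ‖mvec a‖ ≤ 1 := by
    rw [mvec_norm]; exact Real.sqrt_le_one.2 ha
  have hcb : c = max 1 ‖mvec b‖ := by rw [mvec_norm]
  have e1 : (fun i j => a i j - χv * (c⁻¹ * b i j)) =
      fun i j => a i j - (χv • (c⁻¹ • mvec b)) (i, j) := by
    ext i j; simp [mvec, smul_eq_mul]; try ring
  have key : ‖mvec a - χv • (c⁻¹ • mvec b)‖
      ≤ 2 * ‖mvec a - mvec b‖ + (1 - χv) := by
    have h1 : mvec a - χv • (c⁻¹ • mvec b)
        = (mvec a - c⁻¹ • mvec b) + (1 - χv) • (c⁻¹ • mvec b) := by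
      rw [sub_smul, one_smul]; abel
    have h2 : ‖c⁻¹ • mvec b‖ ≤ 1 := by
      rw [norm_smul, Real.norm_eq_abs, abs_of_nonneg (inv_nonneg.2 (le_trans zero_le_one
        (le_max_left _ _)))]
      rw [hcb]
      rcases le_or_gt ‖mvec b‖ 1 with hb | hb
      · exact le_trans (mul_le_mul (inv_le_one_of_one_le₀ (le_max_left _ _)) hb
          (norm_nonneg _) (by positivity)) (by norm_num)
      · rw [max_eq_right hb.le, inv_mul_cancel₀ (by positivity)]
    calc ‖mvec a - χv • (c⁻¹ • mvec b)‖
        ≤ ‖mvec a - c⁻¹ • mvec b‖ + ‖(1 - χv) • (c⁻¹ • mvec b)‖ := by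
          rw [h1]; exact norm_add_le _ _
      _ ≤ 2 * ‖mvec a - mvec b‖ + (1 - χv) := by
          refine add_le_add ?_ ?_
          · rw [hcb]; exact trunc_vec _ _ hav
          · rw [norm_smul, Real.norm_eq_abs, abs_of_nonneg (by linarith)]
            exact mul_le_of_le_one_right (by linarith) h2
  calc Real.sqrt (∑ i, ∑ j, (a i j - χv * (c⁻¹ * b i j))^2)
      = ‖mvec a - χv • (c⁻¹ • mvec b)‖ := by
        rw [← mvec_norm]
        congr 1
        all_goals try (ext p; simp [mvec, smul_eq_mul]; try ring)
    _ ≤ 2 * ‖mvec a - mvec b‖ + (1 - χv) := key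
    _ = 2 * Real.sqrt (∑ i, ∑ j, (a i j - b i j)^2) + (1 - χv) := by
        rw [← mvec_sub, mvec_norm]

lemma sqrt_sum_sq_le_sum_abs (a : Fin m → Fin n → ℝ) :
    Real.sqrt (∑ i, ∑ j, (a i j)^2) ≤ ∑ i, ∑ j, |a i j| := by
  have e1 : ∀ c : Fin m → Fin n → ℝ, ∑ i, ∑ j, c i j
      = ∑ p : Fin m × Fin n, c p.1 p.2 := by
    intro c; rw [← Finset.sum_product']; rfl
  rw [e1, e1 (fun i j => |a i j|)]
  have h : ∑ p : Fin m × Fin n, (a p.1 p.2)^2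
      ≤ (∑ p : Fin m × Fin n, |a p.1 p.2|)^2 := by
    refine le_trans (le_of_eq ?_) (Finset.sum_sq_le_sq_sum_of_nonneg fun _ _ => abs_nonneg _)
    simp [sq_abs]
  refine le_trans (Real.sqrt_le_sqrt h) (le_of_eq ?_)
  exact Real.sqrt_sq (Finset.sum_nonneg fun _ _ => abs_nonneg _)

end MatNorm

/-- The normalized density direction. -/
def gfun (μ : VMat n m) (i : Fin m) (j : Fin n) (x : Rn n) : ℝ :=
  if fden μ x = 0 then 0 else (vComp μ i j).rnDeriv (vDom μ) x / fden μ x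

lemma measurable_gfun (μ : VMat n m) (i : Fin m) (j : Fin n) : Measurable (gfun μ i j) := by
  unfold gfun
  exact Measurable.ite ((measurable_fden μ) (measurableSet_singleton 0)) measurable_const
    ((SignedMeasure.measurable_rnDeriv _ _).div (measurable_fden μ))

lemma sum_sq_rnDeriv (μ : VMat n m) (x : Rn n) :
    ∑ i, ∑ j, ((vComp μ i j).rnDeriv (vDom μ) x)^2 = (fden μ x)^2 := by
  rw [fden, Real.sq_sqrt (Finset.sum_nonneg fun _ _ => Finset.sum_nonneg fun _ _ => sq_nonneg _)]

lemma rnDeriv_eq_zero_of_fden (μ : VMat n m) {x : Rn n} (hx : fden μ x = 0)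
    (i : Fin m) (j : Fin n) : (vComp μ i j).rnDeriv (vDom μ) x = 0 := by
  have h0 : ∑ i, ∑ j, ((vComp μ i j).rnDeriv (vDom μ) x)^2 = 0 := by
    rw [sum_sq_rnDeriv, hx]; norm_num
  have h1 := (Finset.sum_eq_zero_iff_of_nonneg
    (fun i _ => Finset.sum_nonneg fun j _ => sq_nonneg _)).1 h0 i (Finset.mem_univ i)
  have h2 := (Finset.sum_eq_zero_iff_of_nonneg (fun j _ => sq_nonneg _)).1 h1 j (Finset.mem_univ j)
  exact pow_eq_zero_iff (n := 2) (by norm_num) |>.1 h2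

lemma gfun_sum_sq_le (μ : VMat n m) (x : Rn n) : ∑ i, ∑ j, (gfun μ i j x)^2 ≤ 1 := by
  by_cases hx : fden μ x = 0
  · simp [gfun, hx]
  · have : ∑ i, ∑ j, (gfun μ i j x)^2
        = (∑ i, ∑ j, ((vComp μ i j).rnDeriv (vDom μ) x)^2) / (fden μ x)^2 := by
      rw [Finset.sum_div]
      refine Finset.sum_congr rfl fun i _ => ?_
      rw [Finset.sum_div]
      refine Finset.sum_congr rfl fun j _ => ?_
      rw [gfun, if_neg hx, div_pow]
    rw [this, sum_sq_rnDeriv, div_self (pow_ne_zero _ hx)]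

lemma sum_gfun_mul (μ : VMat n m) (x : Rn n) :
    ∑ i, ∑ j, gfun μ i j x * (vComp μ i j).rnDeriv (vDom μ) x = fden μ x := by
  by_cases hx : fden μ x = 0
  · rw [hx]
    refine Finset.sum_eq_zero fun i _ => Finset.sum_eq_zero fun j _ => ?_
    rw [rnDeriv_eq_zero_of_fden μ hx, mul_zero]
  · have : ∑ i, ∑ j, gfun μ i j x * (vComp μ i j).rnDeriv (vDom μ) x
        = (∑ i, ∑ j, ((vComp μ i j).rnDeriv (vDom μ) x)^2) / fden μ x := by
      rw [Finset.sum_div]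
      refine Finset.sum_congr rfl fun i _ => ?_
      rw [Finset.sum_div]
      refine Finset.sum_congr rfl fun j _ => ?_
      rw [gfun, if_neg hx, div_mul_eq_mul_div, sq]
    rw [this, sum_sq_rnDeriv, sq, mul_div_assoc, div_self hx, mul_one]

lemma integrable_psi_f (μ : VMat n m) {W : Set (Rn n)} {ψ} (hψ : ψ ∈ AdmS m n W)
    (i : Fin m) (j : Fin n) :
    Integrable (fun x => ψ i j x * (vComp μ i j).rnDeriv (vDom μ) x) (vDom μ) :=
  (SignedMeasure.integrable_rnDeriv _ _).bdd_mul (c := 1)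
    (hψ.1 i j).aestronglyMeasurable
    (Filter.Eventually.of_forall fun x => by
      rw [Real.norm_eq_abs]; exact AdmS_bound hψ i j x)

lemma sum_sInt_eq_integral (μ : VMat n m) {W : Set (Rn n)} {ψ} (hψ : ψ ∈ AdmS m n W) :
    ∑ i, ∑ j, sInt (vComp μ i j) (ψ i j)
      = ∫ x, ∑ i, ∑ j, ψ i j x * (vComp μ i j).rnDeriv (vDom μ) x ∂(vDom μ) := by
  have hint : ∀ i j, Integrable (ψ i j) (vDom μ) :=
    fun i j => (hψ.1 i j).integrable_of_hasCompactSupport (hψ.2.1 i j)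
  rw [integral_finset_sum _ fun i _ => integrable_finset_sum _ fun j _ => integrable_psi_f μ hψ i j]
  refine Finset.sum_congr rfl fun i _ => ?_
  rw [integral_finset_sum _ fun j _ => integrable_psi_f μ hψ i j]
  exact Finset.sum_congr rfl fun j _ =>
    sInt_eq_integral μ i j (ψ i j) (hint i j) (hψ.1 i j).measurable 1 (AdmS_bound hψ i j)

end A2

namespace A2
variable {n m : ℕ}

lemma evar_le_iSup {A : Set (Rn n)} (hAo : IsOpen A) (hAb : Bornology.IsBounded A)
    (μ : VMat n m) (hμ : ∀ s, MeasurableSet s → s ∩ A = ∅ → μ s = 0)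
    {U : Set (Rn n)} (hUo : IsOpen U) :
    evar μ U ≤ ⨆ ψ : AdmS m n (U ∩ A),
      ENNReal.ofReal (∑ i, ∑ j, sInt (vComp μ i j) (ψ.1 i j)) := by
  classical
  set V := U ∩ A with hVdef
  have hVo : IsOpen V := hUo.inter hAo
  have hVm : MeasurableSet V := hVo.measurableSet
  -- evar μ U = evar μ V
  have hUV : evar μ U = evar μ V := by
    have h0 : evar μ (U \ A) = 0 := by
      refine evar_null μ hμ (hUo.measurableSet.diff hAo.measurableSet) ?_
      exact Set.diff_inter_self
    have h1 := measure_inter_add_diff (μ := evar μ) U hAo.measurableSet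
    rw [← h1, h0, add_zero]
  rw [hUV]
  refine ENNReal.le_of_forall_pos_le_add fun ε hε _ => ?_
  set ν := vDom μ with hνdef
  set ρ := evar μ with hρdef
  set fd := fun (i : Fin m) (j : Fin n) (x : Rn n) => (vComp μ i j).rnDeriv ν x with hfddef
  set δ : ℝ := (ε : ℝ) / (2 * (m * n + 1)) with hδdef
  have hδpos : 0 < δ := by
    apply div_pos (by exact_mod_cast hε) (by positivity)
  have hδ0 : ENNReal.ofReal δ ≠ 0 := (ENNReal.ofReal_pos.2 hδpos).ne'
  -- compact K ⊆ V
  obtain ⟨K, hKV, hKc, hKsmall⟩ :=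
    hVm.exists_isCompact_diff_lt (measure_ne_top ρ V) hδ0
  -- cutoff χ
  have hVbd : Bornology.IsBounded V := hAb.subset Set.inter_subset_right
  have hVcl : IsCompact (closure V) := hVbd.isCompact_closure
  obtain ⟨χ, hχsupp, hχK, hχmem⟩ :=
    exists_tsupport_one_of_isOpen_isClosed hVo hVcl hKc.isClosed hKV
  have hχcs : HasCompactSupport ⇑χ :=
    hVcl.of_isClosed_subset (isClosed_tsupport _) (hχsupp.trans subset_closure)
  -- approximations θ
  have hgmem : ∀ p : Fin m × Fin n, MemLp (V.indicator (gfun μ p.1 p.2)) 1 ρ := by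
    intro p
    refine MemLp.of_bound (((measurable_gfun μ p.1 p.2).indicator hVm).aestronglyMeasurable)
      1 (Filter.Eventually.of_forall fun x => ?_)
    rw [Real.norm_eq_abs]
    by_cases hx : x ∈ V
    · rw [Set.indicator_of_mem hx]
      exact abs_le_one_of_sum_sq (a := fun i j => gfun μ i j x) (gfun_sum_sq_le μ x) p.1 p.2
    · rw [Set.indicator_of_notMem hx]; norm_num
  choose θ hθcs hθerr hθcont _ using fun p : Fin m × Fin n =>
    (hgmem p).exists_hasCompactSupport_eLpNorm_sub_le one_ne_top (ε := ENNReal.ofReal δ) hδ0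
  -- truncation factor
  set cf : Rn n → ℝ := fun x => max 1 (Real.sqrt (∑ i, ∑ j, (θ (i,j) x)^2)) with hcfdef
  have hc1 : ∀ x, 1 ≤ cf x := fun x => le_max_left _ _
  have hcpos : ∀ x, 0 < cf x := fun x => lt_of_lt_of_le one_pos (hc1 x)
  have hccont : Continuous cf := by
    refine continuous_const.max (Real.continuous_sqrt.comp ?_)
    exact continuous_finset_sum _ fun i _ => continuous_finset_sum _ fun j _ =>
      ((hθcont (i,j)).pow 2)
  -- the test field
  set ψ : Fin m → Fin n → Rn n → ℝ := fun i j x => χ x * ((cf x)⁻¹ * θ (i,j) x) with hψdef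
  have hψcont : ∀ i j, Continuous (ψ i j) := fun i j =>
    χ.continuous.mul ((hccont.inv₀ fun x => (hcpos x).ne').mul (hθcont (i,j)))
  have hψsuppχ : ∀ i j, tsupport (ψ i j) ⊆ tsupport χ := by
    intro i j
    refine closure_mono fun x hx => ?_
    simp only [Function.mem_support] at hx ⊢
    intro h0
    apply hx
    rw [hψdef]
    simp [h0]
  have hψcs : ∀ i j, HasCompactSupport (ψ i j) := fun i j =>
    hχcs.of_isClosed_subset (isClosed_tsupport _) (hψsuppχ i j)
  have hψsumsq : ∀ x, ∑ i, ∑ j, (ψ i j x)^2 ≤ 1 := by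
    intro x
    have hθc : ∑ i, ∑ j, (θ (i,j) x)^2 ≤ (cf x)^2 := by
      rw [← Real.sq_sqrt (Finset.sum_nonneg fun _ _ => Finset.sum_nonneg fun _ _ => sq_nonneg _)]
      exact pow_le_pow_left₀ (Real.sqrt_nonneg _) (le_max_right _ _) 2
    have heq : ∑ i, ∑ j, (ψ i j x)^2
        = (χ x)^2 * (((cf x)⁻¹)^2 * ∑ i, ∑ j, (θ (i,j) x)^2) := by
      simp_rw [Finset.mul_sum]
      refine Finset.sum_congr rfl fun i _ => Finset.sum_congr rfl fun j _ => ?_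
      rw [hψdef]; ring
    rw [heq]
    have h2 : ((cf x)⁻¹)^2 * ∑ i, ∑ j, (θ (i,j) x)^2 ≤ 1 := by
      calc ((cf x)⁻¹)^2 * ∑ i, ∑ j, (θ (i,j) x)^2
          ≤ ((cf x)⁻¹)^2 * (cf x)^2 := by
            exact mul_le_mul_of_nonneg_left hθc (by positivity)
        _ = ((cf x)⁻¹ * cf x)^2 := by ring
        _ = 1 := by rw [inv_mul_cancel₀ (hcpos x).ne']; norm_num
    exact mul_le_one₀ (pow_le_one₀ (hχmem x).1 (hχmem x).2) (by positivity) h2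
  have hψadm : ψ ∈ AdmS m n V :=
    ⟨hψcont, hψcs, fun i j => (hψsuppχ i j).trans hχsupp, hψsumsq⟩
  -- the defect function
  set D : Rn n → ℝ := fun x => Real.sqrt (∑ i, ∑ j, (gfun μ i j x - ψ i j x)^2) with hDdef
  have hDmeas : Measurable D := by
    apply Measurable.sqrt
    exact Finset.measurable_sum _ fun i _ => Finset.measurable_sum _ fun j _ =>
      (((measurable_gfun μ i j).sub (hψcont i j).measurable).pow_const 2)
  have hDnon : ∀ x, 0 ≤ D x := fun x => Real.sqrt_nonneg _
  have hD2 : ∀ x, D x ≤ 2 := by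
    intro x
    refine le_trans (S_sub_le _ _) ?_
    have h1 : Real.sqrt (∑ i, ∑ j, (gfun μ i j x)^2) ≤ 1 :=
      Real.sqrt_le_one.2 (gfun_sum_sq_le μ x)
    have h2 : Real.sqrt (∑ i, ∑ j, (ψ i j x)^2) ≤ 1 := Real.sqrt_le_one.2 (hψsumsq x)
    linarith
  -- pointwise defect inequality
  have hpt : ∀ x, fden μ x - (∑ i, ∑ j, ψ i j x * fd i j x) ≤ D x * fden μ x := by
    intro x
    have h1 : fden μ x - (∑ i, ∑ j, ψ i j x * fd i j x)
        = ∑ i, ∑ j, (gfun μ i j x - ψ i j x) * fd i j x := by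
      conv_lhs => rw [← sum_gfun_mul μ x]
      rw [← Finset.sum_sub_distrib]
      refine Finset.sum_congr rfl fun i _ => ?_
      rw [← Finset.sum_sub_distrib]
      exact Finset.sum_congr rfl fun j _ => by rw [hfddef]; ring
    rw [h1]
    refine le_trans (double_cs _ _) ?_
    exact le_of_eq rfl
  -- integrabilities
  have hIfden : Integrable (fden μ) ν := integrable_fden μ
  have hIψf : Integrable (fun x => ∑ i, ∑ j, ψ i j x * fd i j x) ν :=
    integrable_finset_sum _ fun i _ => integrable_finset_sum _ fun j _ =>
      integrable_psi_f μ hψadm i j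
  have hIDf : Integrable (fun x => D x * fden μ x) ν :=
    hIfden.bdd_mul (c := 2) hDmeas.aestronglyMeasurable
      (Filter.Eventually.of_forall fun x => by
        rw [Real.norm_eq_abs, abs_of_nonneg (hDnon x)]; exact hD2 x)
  -- step: J ≤ J2
  have hJ : ∫ x in V, (fden μ x - ∑ i, ∑ j, ψ i j x * fd i j x) ∂ν
      ≤ ∫ x in V, D x * fden μ x ∂ν :=
    integral_mono (hIfden.restrict.sub hIψf.restrict) hIDf.restrict fun x => hpt x
  -- step: J2 as lintegral against ρ
  have hJ2 : ∫ x in V, D x * fden μ x ∂ν = (∫⁻ x in V, ENNReal.ofReal (D x) ∂ρ).toReal := by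
    rw [integral_eq_lintegral_of_nonneg_ae
      (Filter.Eventually.of_forall fun x => mul_nonneg (hDnon x) (fden_nonneg μ x))
      ((hDmeas.mul (measurable_fden μ)).aestronglyMeasurable)]
    congr 1
    rw [hρdef, evar_eq, restrict_withDensity hVm,
      lintegral_withDensity_eq_lintegral_mul _ (measurable_fden μ).ennreal_ofReal
        hDmeas.ennreal_ofReal]
    refine lintegral_congr fun x => ?_
    simp only [Pi.mul_apply]
    rw [ENNReal.ofReal_mul (hDnon x), mul_comm]
  -- per-component approximation bounds
  have hgVle : ∀ (i : Fin m) (j : Fin n),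
      ∫⁻ x in V, ENNReal.ofReal |gfun μ i j x - θ (i,j) x| ∂ρ ≤ ENNReal.ofReal δ := by
    intro i j
    calc ∫⁻ x in V, ENNReal.ofReal |gfun μ i j x - θ (i,j) x| ∂ρ
        = ∫⁻ x in V, ENNReal.ofReal |V.indicator (gfun μ i j) x - θ (i,j) x| ∂ρ := by
          refine setLIntegral_congr_fun hVm (fun x hx => ?_)
          rw [Set.indicator_of_mem hx]
      _ ≤ ∫⁻ x, ENNReal.ofReal |V.indicator (gfun μ i j) x - θ (i,j) x| ∂ρ :=
          setLIntegral_le_lintegral _ _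
      _ = eLpNorm (V.indicator (gfun μ i j) - θ (i,j)) 1 ρ := by
          rw [eLpNorm_one_eq_lintegral_enorm]
          refine lintegral_congr fun x => ?_
          rw [← ofReal_norm_eq_enorm, Real.norm_eq_abs, Pi.sub_apply]
      _ ≤ ENNReal.ofReal δ := hθerr (i,j)
  -- cutoff error bound
  have hχint : ∫⁻ x in V, ENNReal.ofReal (1 - χ x) ∂ρ ≤ ENNReal.ofReal δ := by
    calc ∫⁻ x in V, ENNReal.ofReal (1 - χ x) ∂ρ
        ≤ ∫⁻ x in V, (V \ K).indicator (fun _ => 1) x ∂ρ := by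
          refine setLIntegral_mono (measurable_one.indicator (hVm.diff hKc.measurableSet))
            fun x hx => ?_
          by_cases hk : x ∈ K
          · have h1 : χ x = 1 := hχK hk
            simp [h1]
          · rw [Set.indicator_of_mem (Set.mem_diff_of_mem hx hk)]
            exact ENNReal.ofReal_le_one.2 (by linarith [(hχmem x).1])
      _ = (ρ.restrict V) (V \ K) := by
          rw [lintegral_indicator (hVm.diff hKc.measurableSet)]
          exact setLIntegral_one _
      _ ≤ ENNReal.ofReal δ := by
          rw [Measure.restrict_apply (hVm.diff hKc.measurableSet)]
          exact le_trans (measure_mono Set.inter_subset_left) hKsmall.le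
  -- pointwise ENNReal bound for D
  have hptD : ∀ x, ENNReal.ofReal (D x)
      ≤ (∑ i, ∑ j, 2 * ENNReal.ofReal |gfun μ i j x - θ (i,j) x|) + ENNReal.ofReal (1 - χ x) := by
    intro x
    have h1 : D x ≤ 2 * Real.sqrt (∑ i, ∑ j, (gfun μ i j x - θ (i,j) x)^2) + (1 - χ x) := by
      have h := pointwise_trunc (fun i j => gfun μ i j x) (fun i j => θ (i,j) x) (χ x)
        (hχmem x).1 (hχmem x).2 (gfun_sum_sq_le μ x)
      exact h
    have h2 : D x ≤ 2 * (∑ i, ∑ j, |gfun μ i j x - θ (i,j) x|) + (1 - χ x) := by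
      refine le_trans h1 ?_
      have := sqrt_sum_sq_le_sum_abs (fun i j => gfun μ i j x - θ (i,j) x)
      linarith
    calc ENNReal.ofReal (D x)
        ≤ ENNReal.ofReal (2 * (∑ i, ∑ j, |gfun μ i j x - θ (i,j) x|) + (1 - χ x)) :=
          ENNReal.ofReal_le_ofReal h2
      _ ≤ ENNReal.ofReal (2 * (∑ i, ∑ j, |gfun μ i j x - θ (i,j) x|))
            + ENNReal.ofReal (1 - χ x) := ENNReal.ofReal_add_le
      _ = (∑ i, ∑ j, 2 * ENNReal.ofReal |gfun μ i j x - θ (i,j) x|)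
            + ENNReal.ofReal (1 - χ x) := by
          congr 1
          rw [ENNReal.ofReal_mul (by norm_num : (0:ℝ) ≤ 2)]
          rw [ENNReal.ofReal_sum_of_nonneg
            (fun _ _ => Finset.sum_nonneg fun _ _ => abs_nonneg _)]
          rw [Finset.mul_sum]
          refine Finset.sum_congr rfl fun i _ => ?_
          rw [ENNReal.ofReal_sum_of_nonneg (fun _ _ => abs_nonneg _), Finset.mul_sum]
          refine Finset.sum_congr rfl fun j _ => ?_
          norm_num
  -- the total lintegral bound
  have hL : ∫⁻ x in V, ENNReal.ofReal (D x) ∂ρ ≤ ENNReal.ofReal (ε : ℝ) := by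
    have hmeascomp : ∀ (i : Fin m) (j : Fin n),
        Measurable fun x => 2 * ENNReal.ofReal |gfun μ i j x - θ (i,j) x| := fun i j =>
      (measurable_const.mul (((measurable_gfun μ i j).sub
        (hθcont (i,j)).measurable).abs.ennreal_ofReal))
    calc ∫⁻ x in V, ENNReal.ofReal (D x) ∂ρ
        ≤ ∫⁻ x in V, ((∑ i, ∑ j, 2 * ENNReal.ofReal |gfun μ i j x - θ (i,j) x|)
            + ENNReal.ofReal (1 - χ x)) ∂ρ := lintegral_mono fun x => hptD x
      _ = (∑ i, ∑ j, ∫⁻ x in V, 2 * ENNReal.ofReal |gfun μ i j x - θ (i,j) x| ∂ρ)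
            + ∫⁻ x in V, ENNReal.ofReal (1 - χ x) ∂ρ := by
          rw [lintegral_add_left (Finset.measurable_sum _ fun i _ =>
            Finset.measurable_sum _ fun j _ => hmeascomp i j)]
          congr 1
          rw [lintegral_finset_sum _ fun i _ => Finset.measurable_sum _ fun j _ => hmeascomp i j]
          exact Finset.sum_congr rfl fun i _ =>
            lintegral_finset_sum _ fun j _ => hmeascomp i j
      _ ≤ (∑ _i : Fin m, ∑ _j : Fin n, 2 * ENNReal.ofReal δ) + ENNReal.ofReal δ := by
          refine add_le_add (Finset.sum_le_sum fun i _ => Finset.sum_le_sum fun j _ => ?_) hχint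
          rw [lintegral_const_mul (f := fun x => ENNReal.ofReal |gfun μ i j x - θ (i,j) x|) _ (((measurable_gfun μ i j).sub
            (hθcont (i,j)).measurable).abs.ennreal_ofReal)]
          exact mul_le_mul_right (hgVle i j) 2
      _ ≤ ENNReal.ofReal (ε : ℝ) := by
          simp only [Finset.sum_const, Finset.card_univ, Fintype.card_fin, nsmul_eq_mul]
          have e2 : (2 : ℝ≥0∞) = ENNReal.ofReal (2:ℝ) := by
            rw [ENNReal.ofReal_ofNat]
          have em : (m : ℝ≥0∞) = ENNReal.ofReal (m:ℝ) := by
            rw [ENNReal.ofReal_natCast]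
          have en : (n : ℝ≥0∞) = ENNReal.ofReal (n:ℝ) := by
            rw [ENNReal.ofReal_natCast]
          rw [e2, em, en, ← ENNReal.ofReal_mul (by norm_num), ← ENNReal.ofReal_mul (by positivity),
            ← ENNReal.ofReal_mul (by positivity), ← ENNReal.ofReal_add (by positivity) hδpos.le]
          refine ENNReal.ofReal_le_ofReal ?_
          have harith : 2 * ((m:ℝ) * n + 1) * δ = (ε:ℝ) := by
            rw [hδdef]; field_simp
          have hmn : (0:ℝ) ≤ (m:ℝ) * n := by positivity
          nlinarith [hδpos.le]
  -- convert: toReal bound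
  have hLreal : (∫⁻ x in V, ENNReal.ofReal (D x) ∂ρ).toReal ≤ (ε : ℝ) := by
    refine le_trans (ENNReal.toReal_mono ENNReal.ofReal_ne_top hL) ?_
    exact le_of_eq (ENNReal.toReal_ofReal ε.2)
  -- localize the integral of ∑ ψ f
  have hIdent : ∫ x, (∑ i, ∑ j, ψ i j x * fd i j x) ∂ν
      = ∫ x in V, (∑ i, ∑ j, ψ i j x * fd i j x) ∂ν := by
    rw [← integral_indicator hVm]
    congr 1
    refine (Set.indicator_eq_self.2 ?_).symm
    intro x hx
    simp only [Function.mem_support] at hx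
    by_contra hxV
    apply hx
    refine Finset.sum_eq_zero fun i _ => Finset.sum_eq_zero fun j _ => ?_
    have h0 : ψ i j x = 0 :=
      image_eq_zero_of_notMem_tsupport fun hmem => hxV (hψadm.2.2.1 i j hmem)
    rw [h0, zero_mul]
  -- main real inequality
  have hsumle : ∫ x in V, fden μ x ∂ν ≤ (∑ i, ∑ j, sInt (vComp μ i j) (ψ i j)) + (ε:ℝ) := by
    have h1 : ∑ i, ∑ j, sInt (vComp μ i j) (ψ i j) = ∫ x in V, (∑ i, ∑ j, ψ i j x * fd i j x) ∂ν := by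
      rw [sum_sInt_eq_integral μ hψadm, hIdent]
    have h2 : ∫ x in V, (fden μ x - ∑ i, ∑ j, ψ i j x * fd i j x) ∂ν
        = ∫ x in V, fden μ x ∂ν - ∫ x in V, (∑ i, ∑ j, ψ i j x * fd i j x) ∂ν :=
      integral_sub hIfden.restrict hIψf.restrict
    rw [h1]
    have h3 := hJ
    rw [h2] at h3
    have h4 := hJ2 ▸ hLreal
    linarith [h3, h4, hJ2]
  -- final assembly
  calc evar μ V = ∫⁻ x in V, ENNReal.ofReal (fden μ x) ∂ν := by
        rw [evar_eq, withDensity_apply _ hVm]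
    _ = ENNReal.ofReal (∫ x in V, fden μ x ∂ν) :=
        (ofReal_integral_eq_lintegral_ofReal hIfden.restrict
          (Filter.Eventually.of_forall fun x => fden_nonneg μ x)).symm
    _ ≤ ENNReal.ofReal ((∑ i, ∑ j, sInt (vComp μ i j) (ψ i j)) + (ε:ℝ)) :=
        ENNReal.ofReal_le_ofReal hsumle
    _ ≤ ENNReal.ofReal (∑ i, ∑ j, sInt (vComp μ i j) (ψ i j)) + ENNReal.ofReal (ε:ℝ) :=
        ENNReal.ofReal_add_le
    _ ≤ (⨆ ψ' : AdmS m n V, ENNReal.ofReal (∑ i, ∑ j, sInt (vComp μ i j) (ψ'.1 i j))) + ↑ε := by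
        refine add_le_add ?_ (le_of_eq ENNReal.ofReal_coe_nnreal)
        exact le_iSup (fun ψ' : AdmS m n V =>
          ENNReal.ofReal (∑ i, ∑ j, sInt (vComp μ i j) (ψ'.1 i j))) ⟨ψ, hψadm⟩

end A2

namespace A2
variable {n m : ℕ} {A : Set (Rn n)} {R : ℝ}

instance (n m : ℕ) (A : Set (Rn n)) (R : ℝ) : BorelSpace (MR n m A R) := ⟨rfl⟩

lemma cont_eval (i : Fin m) (j : Fin n) (φ : TestFun A) :
    Continuous fun μ : MR n m A R => sInt (vComp μ.1 i j) φ.1 := by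
  have h : Continuous fun μ : MR n m A R =>
      (fun q : Fin m × Fin n × TestFun A => sInt (vComp μ.1 q.1 q.2.1) q.2.2.1) :=
    continuous_induced_dom
  exact (continuous_apply (i, j, φ)).comp h

lemma measurable_evar_open (hAo : IsOpen A) (hAb : Bornology.IsBounded A)
    {U : Set (Rn n)} (hUo : IsOpen U) :
    Measurable fun μ : MR n m A R => evar μ.1 U := by
  have heq : (fun μ : MR n m A R => evar μ.1 U)
      = fun μ => ⨆ ψ : AdmS m n (U ∩ A),
          ENNReal.ofReal (∑ i, ∑ j, sInt (vComp μ.1 i j) (ψ.1 i j)) := by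
    funext μ
    refine le_antisymm (evar_le_iSup hAo hAb μ.1 μ.2.2 hUo) (iSup_le fun ψ => ?_)
    exact le_trans (F_le_evar μ.1 (hUo.inter hAo).measurableSet ψ.2)
      (measure_mono Set.inter_subset_left)
  rw [heq]
  refine LowerSemicontinuous.measurable (lowerSemicontinuous_iSup fun ψ => ?_)
  refine Continuous.lowerSemicontinuous ?_
  refine ENNReal.continuous_ofReal.comp ?_
  refine continuous_finset_sum _ fun i _ => continuous_finset_sum _ fun j _ => ?_
  exact cont_eval i j ⟨ψ.1 i j, ψ.2.1 i j, ψ.2.2.1 i j,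
    (ψ.2.2.2.1 i j).trans Set.inter_subset_right⟩

lemma measurable_evar_set (hAo : IsOpen A) (hAb : Bornology.IsBounded A)
    {s : Set (Rn n)} (hs : MeasurableSet s) :
    Measurable fun μ : MR n m A R => evar μ.1 s := by
  refine MeasurableSpace.induction_on_inter
    (C := fun s _ => Measurable fun μ : MR n m A R => evar μ.1 s)
    (BorelSpace.measurable_eq) isPiSystem_isOpen ?_ ?_ ?_ ?_ s hs
  · simp only [measure_empty]; exact measurable_const
  · exact fun t ht => measurable_evar_open hAo hAb ht
  · intro t htm hC
    have he : ∀ μ : MR n m A R, evar μ.1 tᶜ = evar μ.1 Set.univ - evar μ.1 t :=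
      fun μ => measure_compl htm (measure_ne_top _ _)
    simp_rw [he]
    exact (measurable_evar_open hAo hAb isOpen_univ).sub hC
  · intro f hdisj hfm hC
    have he : ∀ μ : MR n m A R, evar μ.1 (⋃ i, f i) = ∑' i, evar μ.1 (f i) :=
      fun μ => measure_iUnion hdisj hfm
    simp_rw [he]
    exact Measurable.ennreal_tsum hC

end A2


end LemmaA2Aux

/-- **Lemma A.2**: joint measurability of `(λ,μ) ↦ ∫_A h(λ,x) d|μ|(x)`. -/
theorem integral_against_variation_measurable
    {Λ : Type*} [MeasurableSpace Λ]
    (n m : ℕ) [NeZero n] (hn : 2 ≤ n) (hm : 1 ≤ m)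
    (A : Set (Rn n)) (hAo : IsOpen A) (hAb : Bornology.IsBounded A)
    (R : ℝ) (hR : 0 < R)
    (h : Λ → Rn n → ℝ)
    (C : ℝ) (hbd : ∀ l, ∀ x ∈ A, |h l x| ≤ C)
    (hmeas : Measurable fun q : Λ × A => h q.1 q.2) :
    Measurable fun q : Λ × MR n m A R => ∫ x in A, h q.1 x ∂(evar q.2.1) := by
  classical
  have hAm : MeasurableSet A := hAo.measurableSet
  -- the kernel μ ↦ |μ| restricted to A
  let κbase : ProbabilityTheory.Kernel (MR n m A R) (Rn n) :=
    { toFun := fun μ => (evar μ.1).restrict A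
      measurable' := by
        refine Measure.measurable_of_measurable_coe _ fun s hs => ?_
        simp_rw [Measure.restrict_apply hs]
        exact A2.measurable_evar_set hAo hAb (hs.inter hAm) }
  let κ : ProbabilityTheory.Kernel (Λ × MR n m A R) (Rn n) := κbase.comap Prod.snd measurable_snd
  have hκapp : ∀ q : Λ × MR n m A R, κ q = (evar q.2.1).restrict A := fun q => rfl
  haveI : ProbabilityTheory.IsFiniteKernel κ := by
    refine ⟨⟨ENNReal.ofReal R, ENNReal.ofReal_lt_top, fun q => ?_⟩⟩
    rw [hκapp, Measure.restrict_apply MeasurableSet.univ]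
    exact le_trans (measure_mono (Set.subset_univ _)) q.2.2.1
  -- the measurable total extension of h
  have hemb : MeasurableEmbedding (fun p : Λ × A => (p.1, (p.2 : Rn n))) :=
    MeasurableEmbedding.id.prodMap (MeasurableEmbedding.subtype_coe hAm)
  let H : Λ × Rn n → ℝ :=
    Function.extend (fun p : Λ × A => (p.1, (p.2 : Rn n))) (fun p => h p.1 p.2) (fun _ => 0)
  have hHmeas : Measurable H := hemb.measurable_extend hmeas measurable_const
  have hHeq : ∀ l x, ∀ hx : x ∈ A, H (l, x) = h l x := by
    intro l x hx
    exact hemb.injective.extend_apply (fun p : Λ × A => h p.1 p.2) (fun _ => 0) (l, ⟨x, hx⟩)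
  have key : (fun q : Λ × MR n m A R => ∫ x in A, h q.1 x ∂(evar q.2.1))
      = fun q => ∫ x, H (q.1, x) ∂(κ q) := by
    funext q
    rw [hκapp]
    exact setIntegral_congr_fun hAm fun x hx => (hHeq q.1 x hx).symm
  rw [key]
  have hf : StronglyMeasurable (Function.uncurry fun (q : Λ × MR n m A R) (x : Rn n) =>
      H (q.1, x)) := by
    have : Measurable fun p : (Λ × MR n m A R) × Rn n => H (p.1.1, p.2) :=
      hHmeas.comp (measurable_fst.fst.prodMk measurable_snd)
    exact this.stronglyMeasurable
  exact (MeasureTheory.StronglyMeasurable.integral_kernel_prod_right (κ := κ) hf).measurable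
end
end

section
/- Let A⊂ℝⁿ be bounded and open, let R>0, and let ρ>0. Then the ℝ^{m×n}-valued function (x,μ)↦μ(A∩B_ρ(x)) is B(A)⊗B(M^R_A)-measurable, where M^R_A carries the weak* topology. -/
open MeasureTheory Filter Topology ENNReal Metric

noncomputable section
open Classical

/-! The indicator of `A ∩ B_ρ(x)` is the pointwise limit of the continuous cutoffs
`φₖ(x, y) = r_k(dist(y, Aᶜ)) · r_k(ρ - |y - x|)`, where `r_k` is a ramp rising from `0` to `1`
on `[1/k, 2/k]`. Each `φₖ(x, ·)` is a test function supported in `A`, so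
`(x, μ) ↦ ∫ φₖ(x, ·) dμ` is weak*-continuous in `μ` and, by dominated convergence, continuous
in `x`; such Carathéodory functions are jointly measurable. Dominated convergence again gives
`∫ φₖ(x, ·) dμ → μ(A ∩ B_ρ(x))`, and a pointwise limit of measurable functions is measurable. -/

open Set Function

lemma Bornology.IsBounded.compl_nonempty {E : Type*} [NormedAddCommGroup E] [NormedSpace ℝ E]
    [Nontrivial E] {A : Set E} (hA : Bornology.IsBounded A) : Aᶜ.Nonempty :=
  nonempty_compl.2 fun h => NormedSpace.unbounded_univ ℝ E (h ▸ hA)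

def ramp (k : ℕ) (t : ℝ) : ℝ := min 1 (max 0 (k * t - 1))

lemma ramp_nonneg (k : ℕ) (t : ℝ) : 0 ≤ ramp k t := le_min zero_le_one (le_max_left _ _)

lemma ramp_le_one (k : ℕ) (t : ℝ) : ramp k t ≤ 1 := min_le_left _ _

lemma continuous_ramp (k : ℕ) : Continuous (ramp k) := by
  unfold ramp; fun_prop

lemma ramp_of_nonpos (k : ℕ) {t : ℝ} (ht : t ≤ 0) : ramp k t = 0 := by
  have : (k : ℝ) * t ≤ 0 := mul_nonpos_of_nonneg_of_nonpos k.cast_nonneg ht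
  simp [ramp, max_eq_left (by linarith : (k : ℝ) * t - 1 ≤ 0)]

lemma one_lt_mul_of_ramp_ne_zero {k : ℕ} {t : ℝ} (h : ramp k t ≠ 0) : 1 < k * t := by
  by_contra! hkt
  exact h (by simp [ramp, max_eq_left (by linarith : (k : ℝ) * t - 1 ≤ 0)])

lemma eventually_ramp_eq_one {t : ℝ} (ht : 0 < t) : ∀ᶠ k in atTop, ramp k t = 1 := by
  filter_upwards [(tendsto_natCast_atTop_atTop (R := ℝ)).eventually_ge_atTop (2 / t)] with k hk
  have : 2 ≤ (k : ℝ) * t := by rwa [div_le_iff₀ ht] at hk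
  exact min_eq_left (le_max_of_le_right (by linarith))

section BallCutoff

variable {X : Type*} [MetricSpace X] (A : Set X) (ρ : ℝ) (k : ℕ)

def ballCutoff (x y : X) : ℝ := ramp k (infDist y Aᶜ) * ramp k (ρ - dist y x)

lemma abs_ballCutoff_le_one (x y : X) : |ballCutoff A ρ k x y| ≤ 1 := by
  rw [ballCutoff, abs_of_nonneg (mul_nonneg (ramp_nonneg _ _) (ramp_nonneg _ _))]
  exact mul_le_one₀ (ramp_le_one _ _) (ramp_nonneg _ _) (ramp_le_one _ _)

lemma continuous_ballCutoff (x : X) : Continuous (ballCutoff A ρ k x) := by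
  unfold ballCutoff
  have := continuous_ramp k
  fun_prop

lemma continuous_ballCutoff_left (y : X) : Continuous fun x => ballCutoff A ρ k x y := by
  unfold ballCutoff
  have := continuous_ramp k
  fun_prop

lemma tsupport_ballCutoff_subset (x : X) :
    tsupport (ballCutoff A ρ k x) ⊆ {y | 1 ≤ k * infDist y Aᶜ ∧ 1 ≤ k * (ρ - dist y x)} := by
  refine closure_minimal (fun y hy => ?_) ?_
  · rw [mem_support, ballCutoff, mul_ne_zero_iff] at hy
    exact ⟨(one_lt_mul_of_ramp_ne_zero hy.1).le, (one_lt_mul_of_ramp_ne_zero hy.2).le⟩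
  · exact (isClosed_le continuous_const (continuous_const.mul (continuous_infDist_pt _))).inter
      (isClosed_le continuous_const
        (continuous_const.mul (continuous_const.sub (continuous_id.dist continuous_const))))

lemma tsupport_ballCutoff_subset_inter (x : X) :
    tsupport (ballCutoff A ρ k x) ⊆ A ∩ closedBall x ρ := by
  intro y hy
  obtain ⟨hA, hball⟩ := tsupport_ballCutoff_subset A ρ k x hy
  refine ⟨by_contra fun hyA => ?_, mem_closedBall.2 ?_⟩
  · rw [infDist_zero_of_mem hyA, mul_zero] at hA
    linarith
  · by_contra! h
    nlinarith [(k.cast_nonneg : (0 : ℝ) ≤ k)]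

lemma hasCompactSupport_ballCutoff [ProperSpace X] (x : X) :
    HasCompactSupport (ballCutoff A ρ k x) :=
  (isCompact_closedBall x ρ).of_isClosed_subset (isClosed_tsupport _)
    ((tsupport_ballCutoff_subset_inter A ρ k x).trans inter_subset_right)

variable {A} in
lemma tendsto_ballCutoff (hA : IsOpen A) (hAc : Aᶜ.Nonempty) (x y : X) :
    Tendsto (fun k => ballCutoff A ρ k x y) atTop (𝓝 ((A ∩ ball x ρ).indicator 1 y)) := by
  by_cases hy : y ∈ A ∩ ball x ρ
  · rw [indicator_of_mem hy, Pi.one_apply]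
    have hdA : 0 < infDist y Aᶜ :=
      (hA.isClosed_compl.notMem_iff_infDist_pos hAc).1 (not_not.2 hy.1)
    have hdx : 0 < ρ - dist y x := sub_pos.2 (mem_ball.1 hy.2)
    refine tendsto_const_nhds.congr' ?_
    filter_upwards [eventually_ramp_eq_one hdA, eventually_ramp_eq_one hdx] with k h₁ h₂
    simp [ballCutoff, h₁, h₂]
  · rw [indicator_of_notMem hy]
    have hzero : ∀ k, ballCutoff A ρ k x y = 0 := by
      intro k
      rw [mem_inter_iff, not_and_or] at hy
      rcases hy with hyA | hyx
      · simp [ballCutoff, infDist_zero_of_mem (mem_compl hyA), ramp_of_nonpos k le_rfl]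
      · simp [ballCutoff, ramp_of_nonpos k (sub_nonpos.2 (not_lt.1 (mem_ball.not.1 hyx)))]
    simp only [hzero, tendsto_const_nhds]

variable [MeasurableSpace X] [BorelSpace X] (μ : Measure X) [IsFiniteMeasure μ]

lemma continuous_integral_ballCutoff : Continuous fun x => ∫ y, ballCutoff A ρ k x y ∂μ :=
  continuous_of_dominated (fun x => (continuous_ballCutoff A ρ k x).aestronglyMeasurable)
    (fun x => ae_of_all _ (abs_ballCutoff_le_one A ρ k x)) (integrable_const 1)
    (ae_of_all _ (continuous_ballCutoff_left A ρ k))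

variable {A} in
lemma tendsto_integral_ballCutoff (hA : IsOpen A) (hAc : Aᶜ.Nonempty) (x : X) :
    Tendsto (fun k => ∫ y, ballCutoff A ρ k x y ∂μ) atTop (𝓝 (μ.real (A ∩ ball x ρ))) := by
  have h := tendsto_integral_of_dominated_convergence (μ := μ) (fun _ => 1)
    (fun k => (continuous_ballCutoff A ρ k x).aestronglyMeasurable) (integrable_const 1)
    (fun k => ae_of_all _ (abs_ballCutoff_le_one A ρ k x))
    (ae_of_all _ (tendsto_ballCutoff ρ hA hAc x))
  rwa [integral_indicator_one ((hA.inter isOpen_ball).measurableSet)]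
    at h

end BallCutoff

section SignedIntegral

variable {n : ℕ} (A : Set (Rn n)) (ρ : ℝ) (σ : SignedMeasure (Rn n))

lemma continuous_sInt_ballCutoff (k : ℕ) : Continuous fun x => sInt σ (ballCutoff A ρ k x) :=
  (continuous_integral_ballCutoff A ρ k _).sub (continuous_integral_ballCutoff A ρ k _)

variable {A} in
lemma tendsto_sInt_ballCutoff (hA : IsOpen A) (hAc : Aᶜ.Nonempty) (x : Rn n) :
    Tendsto (fun k => sInt σ (ballCutoff A ρ k x)) atTop (𝓝 (σ (A ∩ ball x ρ))) := by
  rw [σ.apply_eq_posPart_real_sub_negPart_real (hA.inter isOpen_ball).measurableSet]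
  exact (tendsto_integral_ballCutoff ρ _ hA hAc x).sub (tendsto_integral_ballCutoff ρ _ hA hAc x)

end SignedIntegral

def ballCutoffTestFun {n : ℕ} (A : Set (Rn n)) (ρ : ℝ) (k : ℕ) (x : Rn n) : TestFun A :=
  ⟨ballCutoff A ρ k x, continuous_ballCutoff A ρ k x, hasCompactSupport_ballCutoff A ρ k x,
    (tsupport_ballCutoff_subset_inter A ρ k x).trans inter_subset_left⟩

lemma MR.continuous_sInt_vComp {n m : ℕ} {A : Set (Rn n)} {R : ℝ} (i : Fin m) (j : Fin n)
    (φ : TestFun A) : Continuous fun μ : MR n m A R => sInt (vComp μ.1 i j) φ.1 :=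
  (continuous_apply (i, j, φ)).comp (continuous_induced_dom (f := fun μ : MR n m A R =>
    fun q : Fin m × Fin n × TestFun A => sInt (vComp μ.1 q.1 q.2.1) q.2.2.1))

theorem vector_measure_ball_measurable_general
    (n m : ℕ) [NeZero n]
    (A : Set (Rn n)) (hAo : IsOpen A) (hAb : Bornology.IsBounded A)
    (R : ℝ) (ρ : ℝ) :
    Measurable fun q : A × MR n m A R => q.2.1 (A ∩ ball (q.1 : Rn n) ρ) := by
  have : BorelSpace (MR n m A R) := ⟨rfl⟩
  refine measurable_pi_lambda _ fun i => measurable_pi_lambda _ fun j => ?_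
  have hmeas : ∀ k, Measurable fun q : A × MR n m A R =>
      sInt (vComp q.2.1 i j) (ballCutoff A ρ k q.1) := fun k =>
    measurable_uncurry_of_continuous_of_measurable
      (u := fun (x : A) (μ : MR n m A R) => sInt (vComp μ.1 i j) (ballCutoff A ρ k x))
      (fun μ => (continuous_sInt_ballCutoff A ρ _ k).comp continuous_subtype_val)
      (fun x => (MR.continuous_sInt_vComp i j (ballCutoffTestFun A ρ k x)).measurable)
  exact measurable_of_tendsto_metrizable hmeas <| tendsto_pi_nhds.2 fun q =>
    tendsto_sInt_ballCutoff ρ _ hAo hAb.compl_nonempty q.1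

/-- (A.13): joint measurability of `(x,μ) ↦ μ(A ∩ B_ρ(x))`. -/
theorem vector_measure_ball_measurable
    (n m : ℕ) [NeZero n] (hn : 2 ≤ n) (hm : 1 ≤ m)
    (A : Set (Rn n)) (hAo : IsOpen A) (hAb : Bornology.IsBounded A)
    (R : ℝ) (hR : 0 < R) (ρ : ℝ) (hρ : 0 < ρ) :
    Measurable fun q : A × MR n m A R => q.2.1 (A ∩ ball (q.1 : Rn n) ρ) :=
  vector_measure_ball_measurable_general n m A hAo hAb R ρ
end
end
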